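/- arXiv:1902.08614 — 9 statements merged into one kernel-verified Lean document; each statement's English description precedes it below -/
import Mathlib

section
/- If s and c are differentiable complex-valued functions on a connected open set U containing 0, satisfying s' = c(1+s²), c' = -s(1+c²), s(0)=0, c(0)=1, then s² + s²c² + c² = 1 throughout U. -/
theorem hasDerivAt_lemniscatic_invariant {𝕜 : Type*} [NontriviallyNormedField 𝕜]
    {s c : 𝕜 → 𝕜} {x : 𝕜}
    (hs : HasDerivAt s (c x * (1 + s x ^ 2)) x)
    (hc : HasDerivAt c (-(s x) * (1 + c x ^ 2)) x) :
    HasDerivAt (fun z => s z ^ 2 + s z ^ 2 * c z ^ 2 + c z ^ 2) 0 x := by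
  refine (((hs.pow 2).add ((hs.pow 2).mul (hc.pow 2))).add (hc.pow 2)).congr_deriv ?_
  simp only [Pi.pow_apply]
  push_cast
  ring

theorem lemniscatic_pythagorean
    (U : Set ℂ) (hU : IsOpen U) (hConn : IsConnected U) (h0 : (0 : ℂ) ∈ U)
    (s c : ℂ → ℂ)
    (hs : ∀ z ∈ U, HasDerivAt s (c z * (1 + s z ^ 2)) z)
    (hc : ∀ z ∈ U, HasDerivAt c (-(s z) * (1 + c z ^ 2)) z)
    (hs0 : s 0 = 0) (hc0 : c 0 = 1) :
    ∀ z ∈ U, s z ^ 2 + s z ^ 2 * c z ^ 2 + c z ^ 2 = 1 := by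
  have hF : ∀ z ∈ U, HasDerivAt (fun z => s z ^ 2 + s z ^ 2 * c z ^ 2 + c z ^ 2) 0 z :=
    fun z hz => hasDerivAt_lemniscatic_invariant (hs z hz) (hc z hz)
  intro z hz
  have hconst := hU.is_const_of_deriv_eq_zero hConn.isPreconnected
    (fun w hw => (hF w hw).differentiableAt.differentiableWithinAt)
    (fun w hw => (hF w hw).deriv) hz h0
  simpa [hs0, hc0] using hconst
end

section
/- If s is a differentiable complex function on a connected open set U containing 0 with s' = (1-s⁴)^(1/2) (principal branch), s(0)=0, and |s| < 1 on U, and c is defined by c = s'/(1+s²), then the pair (s,c) satisfies s' = c(1+s²) and c' = -s(1+c²) with s(0)=0, c(0)=1. -/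
/-!
Write `r = (1 - s⁴)^(1/2)`, so `s' = r` and `r² = 1 - s⁴`. Differentiating the square root
gives `r' = -4s³s' / (2r) = -2s³`, and then the quotient rule for `c = r / (1 + s²)` yields
`c' = -s(1 + c²)` once `r²` is replaced by `1 - s⁴`. The bound `|s| < 1` keeps `1 - s⁴` in the
slit plane (where the principal square root is holomorphic and nonzero) and `1 + s²` away from 0.
-/

open Complex Filter Topology

lemma one_sub_pow_mem_slitPlane {w : ℂ} (hw : ‖w‖ < 1) {n : ℕ} (hn : n ≠ 0) :
    1 - w ^ n ∈ slitPlane := by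
  rw [sub_eq_add_neg]
  apply mem_slitPlane_of_norm_lt_one
  rw [norm_neg, norm_pow]
  exact pow_lt_one₀ (norm_nonneg w) hw hn

lemma one_add_sq_ne_zero_of_norm_lt_one {w : ℂ} (hw : ‖w‖ < 1) : 1 + w ^ 2 ≠ 0 := by
  intro h
  refine (pow_lt_one₀ (norm_nonneg w) hw two_ne_zero).ne ?_
  rw [← norm_pow, eq_neg_of_add_eq_zero_right h, norm_neg, norm_one]

lemma cpow_one_half_sq (x : ℂ) : (x ^ ((1 : ℂ) / 2)) ^ 2 = x := by
  rw [one_div]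
  exact cpow_ofNat_inv_pow x 2

lemma HasDerivAt.cpow_one_half {f : ℂ → ℂ} {f' z : ℂ} (hf : HasDerivAt f f' z)
    (hz : f z ∈ slitPlane) :
    HasDerivAt (fun w => f w ^ ((1 : ℂ) / 2)) (f' / (2 * f z ^ ((1 : ℂ) / 2))) z := by
  have hsqrt_ne : f z ^ ((1 : ℂ) / 2) ≠ 0 :=
    cpow_ne_zero_iff.mpr (.inl (slitPlane_ne_zero hz))
  convert hf.cpow_const hz using 1
  rw [cpow_sub _ _ (slitPlane_ne_zero hz), cpow_one]
  nth_rw 3 [← cpow_one_half_sq (f z)]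
  field_simp

lemma HasDerivAt.sqrt_one_sub_pow_four {s : ℂ → ℂ} {z : ℂ}
    (hs : HasDerivAt s ((1 - s z ^ 4) ^ ((1 : ℂ) / 2)) z) (hz : 1 - s z ^ 4 ∈ slitPlane) :
    HasDerivAt (fun w => (1 - s w ^ 4) ^ ((1 : ℂ) / 2)) (-2 * s z ^ 3) z := by
  have hsqrt_ne : (1 - s z ^ 4) ^ ((1 : ℂ) / 2) ≠ 0 :=
    cpow_ne_zero_iff.mpr (.inl (slitPlane_ne_zero hz))
  convert ((hs.fun_pow 4).const_sub 1).cpow_one_half hz using 1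
  field_simp
  ring

lemma hasDerivAt_div_one_add_sq {s r : ℂ → ℂ} {z : ℂ} (hs : HasDerivAt s (r z) z)
    (hr : HasDerivAt r (-2 * s z ^ 3) z) (hr_sq : r z ^ 2 = 1 - s z ^ 4)
    (hne : 1 + s z ^ 2 ≠ 0) :
    HasDerivAt (fun w => r w / (1 + s w ^ 2)) (-(s z) * (1 + (r z / (1 + s z ^ 2)) ^ 2)) z := by
  refine (hr.fun_div ((hs.fun_pow 2).const_add 1) hne).congr_deriv ?_
  field_simp
  linear_combination (-(s z)) * hr_sq

theorem lemniscatic_cosine_from_sine_general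
    (U : Set ℂ) (hU : IsOpen U) (h0 : (0 : ℂ) ∈ U)
    (s c : ℂ → ℂ)
    (hs : ∀ z ∈ U, HasDerivAt s ((1 - s z ^ 4) ^ ((1 : ℂ) / 2)) z)
    (hs0 : s 0 = 0)
    (hbd : ∀ z ∈ U, ‖s z‖ < 1)
    (hc : ∀ z, c z = deriv s z / (1 + s z ^ 2)) :
    (∀ z ∈ U, HasDerivAt s (c z * (1 + s z ^ 2)) z) ∧
    (∀ z ∈ U, HasDerivAt c (-(s z) * (1 + c z ^ 2)) z) ∧
    s 0 = 0 ∧ c 0 = 1 := by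
  set r : ℂ → ℂ := fun w => (1 - s w ^ 4) ^ ((1 : ℂ) / 2)
  have hc_eq : ∀ z ∈ U, c z = r z / (1 + s z ^ 2) := fun z hz => by
    rw [hc z, (hs z hz).deriv]
  refine ⟨fun z hz => ?_, fun z hz => ?_, hs0, ?_⟩
  · rw [hc_eq z hz, div_mul_cancel₀ _ (one_add_sq_ne_zero_of_norm_lt_one (hbd z hz))]
    exact hs z hz
  · have hslit := one_sub_pow_mem_slitPlane (hbd z hz) four_ne_zero
    have hc_nhds : c =ᶠ[𝓝 z] fun w => r w / (1 + s w ^ 2) :=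
      eventually_of_mem (hU.mem_nhds hz) hc_eq
    have hderiv := hasDerivAt_div_one_add_sq (hs z hz) ((hs z hz).sqrt_one_sub_pow_four hslit)
      (cpow_one_half_sq _) (one_add_sq_ne_zero_of_norm_lt_one (hbd z hz))
    rw [hc_eq z hz]
    exact hderiv.congr_of_eventuallyEq hc_nhds
  · simp [hc_eq 0 h0, r, hs0]

theorem lemniscatic_cosine_from_sine
    (U : Set ℂ) (hU : IsOpen U) (hConn : IsConnected U) (h0 : (0 : ℂ) ∈ U)
    (s c : ℂ → ℂ)
    (hs : ∀ z ∈ U, HasDerivAt s ((1 - s z ^ 4) ^ ((1 : ℂ) / 2)) z)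
    (hs0 : s 0 = 0)
    (hbd : ∀ z ∈ U, ‖s z‖ < 1)
    (hc : ∀ z, c z = deriv s z / (1 + s z ^ 2)) :
    (∀ z ∈ U, HasDerivAt s (c z * (1 + s z ^ 2)) z) ∧
    (∀ z ∈ U, HasDerivAt c (-(s z) * (1 + c z ^ 2)) z) ∧
    s 0 = 0 ∧ c 0 = 1 :=
  lemniscatic_cosine_from_sine_general U hU h0 s c hs hs0 hbd hc
end

section
/- If (s,c) and (S,C) are two pairs of differentiable functions on a connected open set U containing 0 both satisfying the system s' = c(1+s²), c' = -s(1+c²) with s(0)=S(0)=0 and c(0)=C(0)=1, then s = S and c = C on U (uniqueness of solutions to the lemniscatic initial value problem). -/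
/-! Restricted to a real line through a point, a holomorphic solution of the autonomous system
`w' = v(w)` is a solution of a real ODE with a locally Lipschitz (here polynomial) field, so by
Picard–Lindelöf uniqueness two solutions with the same initial value agree on a real segment. Being
holomorphic on the connected set `U`, they then agree on all of `U` by the identity theorem. -/

open Set Filter Topology

def lemniscateField (p : ℂ × ℂ) : ℂ × ℂ :=
  (p.2 * (1 + p.1 ^ 2), -p.1 * (1 + p.2 ^ 2))

lemma locallyLipschitz_lemniscateField : LocallyLipschitz lemniscateField :=
  ContDiff.locallyLipschitz (𝕂 := ℂ) (by unfold lemniscateField; fun_prop)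

lemma tendsto_nhds_ofReal_const_add (z₀ : ℂ) :
    Tendsto (fun t : ℝ => z₀ + (t : ℂ)) (𝓝 0) (𝓝 z₀) := by
  simpa using (Complex.continuous_ofReal.const_add z₀).tendsto (0 : ℝ)

lemma frequently_eq_nhdsNE_of_eventuallyEq_along_ofReal {α : Type*} {f g : ℂ → α} {z₀ : ℂ}
    (h : (fun t : ℝ => f (z₀ + t)) =ᶠ[𝓝 0] fun t : ℝ => g (z₀ + t)) :
    ∃ᶠ z in 𝓝[≠] z₀, f z = g z := by
  have hline : Tendsto (fun t : ℝ => z₀ + (t : ℂ)) (𝓝[≠] 0) (𝓝[≠] z₀) := by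
    refine tendsto_nhdsWithin_of_tendsto_nhds_of_eventually_within _ ?_ ?_
    · exact (tendsto_nhds_ofReal_const_add z₀).mono_left nhdsWithin_le_nhds
    · filter_upwards [self_mem_nhdsWithin] with t ht
      simpa using ht
  exact hline.frequently (h.filter_mono nhdsWithin_le_nhds).frequently

section ComplexODE

variable {E : Type*} [NormedAddCommGroup E] [NormedSpace ℂ E] {f g : ℂ → E} {f' : E} {z₀ : ℂ}

lemma HasDerivAt.comp_const_add_ofReal {t : ℝ} (hf : HasDerivAt f f' (z₀ + t)) :
    HasDerivAt (fun t : ℝ => f (z₀ + t)) f' t := by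
  have hline : HasDerivAt (fun t : ℝ => z₀ + (t : ℂ)) 1 t := by
    simpa using (Complex.ofRealCLM.hasDerivAt (x := t)).const_add z₀
  simpa only [one_smul, Function.comp_def] using hf.scomp t hline

variable {v : E → E}

theorem ODE_solution_eventuallyEq_along_ofReal (hv : LocallyLipschitz v)
    (hf : ∀ᶠ z in 𝓝 z₀, HasDerivAt f (v (f z)) z) (hg : ∀ᶠ z in 𝓝 z₀, HasDerivAt g (v (g z)) z)
    (h₀ : f z₀ = g z₀) :
    (fun t : ℝ => f (z₀ + t)) =ᶠ[𝓝 0] fun t : ℝ => g (z₀ + t) := by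
  obtain ⟨K, V, hV, hLip⟩ := hv (f z₀)
  have hsol : ∀ {φ : ℂ → E}, φ z₀ = f z₀ → (∀ᶠ z in 𝓝 z₀, HasDerivAt φ (v (φ z)) z) →
      ∀ᶠ t : ℝ in 𝓝 0, HasDerivAt (fun t : ℝ => φ (z₀ + t)) (v (φ (z₀ + t))) t ∧
        φ (z₀ + t) ∈ V := by
    intro φ hφ₀ hφ
    have hφV : ∀ᶠ z in 𝓝 z₀, φ z ∈ V :=
      (hφ.self_of_nhds.continuousAt.tendsto (hφ₀ ▸ hV) :)
    filter_upwards [(tendsto_nhds_ofReal_const_add z₀).eventually (hφ.and hφV)]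
      with t ⟨hderiv, hmem⟩
    exact ⟨hderiv.comp_const_add_ofReal, hmem⟩
  exact ODE_solution_unique_of_eventually (v := fun _ => v) (s := fun _ => V)
    (Eventually.of_forall fun _ => hLip) (hsol rfl hf) (hsol h₀.symm hg) (by simpa using h₀)

theorem ODE_solution_eqOn_of_isPreconnected [CompleteSpace E] (hv : LocallyLipschitz v)
    {U : Set ℂ} (hU : IsOpen U) (hUc : IsPreconnected U) (hz₀ : z₀ ∈ U)
    (hf : ∀ z ∈ U, HasDerivAt f (v (f z)) z) (hg : ∀ z ∈ U, HasDerivAt g (v (g z)) z)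
    (h₀ : f z₀ = g z₀) : EqOn f g U := by
  have hanalytic : ∀ {φ : ℂ → E}, (∀ z ∈ U, HasDerivAt φ (v (φ z)) z) → AnalyticOnNhd ℂ φ U :=
    fun hφ => DifferentiableOn.analyticOnNhd
      (fun z hz => (hφ z hz).differentiableAt.differentiableWithinAt) hU
  have hnear : ∀ {φ : ℂ → E}, (∀ z ∈ U, HasDerivAt φ (v (φ z)) z) →
      ∀ᶠ z in 𝓝 z₀, HasDerivAt φ (v (φ z)) z :=
    fun hφ => eventually_of_mem (hU.mem_nhds hz₀) hφ
  exact (hanalytic hf).eqOn_of_preconnected_of_frequently_eq (hanalytic hg) hUc hz₀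
    (frequently_eq_nhdsNE_of_eventuallyEq_along_ofReal
      (ODE_solution_eventuallyEq_along_ofReal hv (hnear hf) (hnear hg) h₀))

end ComplexODE

theorem lemniscatic_uniqueness_general
    (U : Set ℂ) (hU : IsOpen U) (hConn : IsConnected U) (h0 : (0 : ℂ) ∈ U)
    (s c S C : ℂ → ℂ)
    (hs : ∀ z ∈ U, HasDerivAt s (c z * (1 + s z ^ 2)) z)
    (hc : ∀ z ∈ U, HasDerivAt c (-(s z) * (1 + c z ^ 2)) z)
    (hS : ∀ z ∈ U, HasDerivAt S (C z * (1 + S z ^ 2)) z)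
    (hC : ∀ z ∈ U, HasDerivAt C (-(S z) * (1 + C z ^ 2)) z)
    (hs0 : s 0 = 0) (hc0 : c 0 = 1) (hS0 : S 0 = 0) (hC0 : C 0 = 1) :
    Set.EqOn s S U ∧ Set.EqOn c C U := by
  have hpair : EqOn (fun z => (s z, c z)) (fun z => (S z, C z)) U :=
    ODE_solution_eqOn_of_isPreconnected locallyLipschitz_lemniscateField hU
      hConn.isPreconnected h0 (fun z hz => (hs z hz).prodMk (hc z hz))
      (fun z hz => (hS z hz).prodMk (hC z hz)) (by simp [hs0, hc0, hS0, hC0])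
  exact ⟨fun z hz => congrArg Prod.fst (hpair hz), fun z hz => congrArg Prod.snd (hpair hz)⟩

theorem lemniscatic_uniqueness
    (U : Set ℂ) (hU : IsOpen U) (hConn : IsConnected U) (h0 : (0 : ℂ) ∈ U)
    (s c S C : ℂ → ℂ)
    (hsA : AnalyticOnNhd ℂ s U) (hcA : AnalyticOnNhd ℂ c U)
    (hSA : AnalyticOnNhd ℂ S U) (hCA : AnalyticOnNhd ℂ C U)
    (hs : ∀ z ∈ U, HasDerivAt s (c z * (1 + s z ^ 2)) z)
    (hc : ∀ z ∈ U, HasDerivAt c (-(s z) * (1 + c z ^ 2)) z)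
    (hS : ∀ z ∈ U, HasDerivAt S (C z * (1 + S z ^ 2)) z)
    (hC : ∀ z ∈ U, HasDerivAt C (-(S z) * (1 + C z ^ 2)) z)
    (hs0 : s 0 = 0) (hc0 : c 0 = 1) (hS0 : S 0 = 0) (hC0 : C 0 = 1) :
    Set.EqOn s S U ∧ Set.EqOn c C U :=
  lemniscatic_uniqueness_general U hU hConn h0 s c S C hs hc hS hC hs0 hc0 hS0 hC0
end

section
/- If s and c are analytic on a disc B_r(0) ⊆ ℂ solving s' = c(1+s²), c' = -s(1+c²), s(0)=0, c(0)=1, with the solution unique, and c is nonvanishing on B_r(0), then s(iz) = i·s(z) and c(iz) = 1/c(z) for all z ∈ B_r(0). -/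
/-!
Differentiating shows that `s² + c² + s²c²` is a first integral of the system, so it is `1` on the
disc. Using it, `S z = -i s(iz)` and `C z = 1 / c(iz)` solve the same initial value problem:
the factor `1 + S² = 1 - s²(iz)` equals `c²(iz) (1 + s²(iz))`, which turns the chain-rule
derivative of `S` into `C (1 + S²)`. Uniqueness gives `S = s` and `C = c`.
-/

open Complex Metric

theorem hasDerivAt_lemniscate_invariant {𝕜 : Type*} [NontriviallyNormedField 𝕜]
    {s c : 𝕜 → 𝕜} {z : 𝕜} (hs : HasDerivAt s (c z * (1 + s z ^ 2)) z)
    (hc : HasDerivAt c (-(s z) * (1 + c z ^ 2)) z) :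
    HasDerivAt (fun w => s w ^ 2 + c w ^ 2 + s w ^ 2 * c w ^ 2) 0 z := by
  refine (((hs.pow 2).add (hc.pow 2)).add ((hs.pow 2).mul (hc.pow 2))).congr_deriv ?_
  simp only [Pi.pow_apply]
  ring

theorem lemniscate_invariant_eq {𝕜 : Type*} [RCLike 𝕜] {U : Set 𝕜} (hU : IsOpen U)
    (hU' : IsPreconnected U) {s c : 𝕜 → 𝕜}
    (hs : ∀ z ∈ U, HasDerivAt s (c z * (1 + s z ^ 2)) z)
    (hc : ∀ z ∈ U, HasDerivAt c (-(s z) * (1 + c z ^ 2)) z) {x y : 𝕜} (hx : x ∈ U)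
    (hy : y ∈ U) :
    s x ^ 2 + c x ^ 2 + s x ^ 2 * c x ^ 2 = s y ^ 2 + c y ^ 2 + s y ^ 2 * c y ^ 2 := by
  have hF z (hz : z ∈ U) := hasDerivAt_lemniscate_invariant (hs z hz) (hc z hz)
  exact hU.is_const_of_deriv_eq_zero hU'
    (fun z hz => (hF z hz).differentiableAt.differentiableWithinAt)
    (fun z hz => (hF z hz).deriv) hx hy

theorem I_mul_mem_ball_zero {r : ℝ} {z : ℂ} (hz : z ∈ ball (0 : ℂ) r) :
    I * z ∈ ball (0 : ℂ) r := by
  simpa [mem_ball_zero_iff] using hz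

theorem hasDerivAt_neg_I_mul_comp_I_mul {s c : ℂ → ℂ} {z : ℂ}
    (hs : HasDerivAt s (c (I * z) * (1 + s (I * z) ^ 2)) (I * z))
    (hinv : s (I * z) ^ 2 + c (I * z) ^ 2 + s (I * z) ^ 2 * c (I * z) ^ 2 = 1)
    (hcz : c (I * z) ≠ 0) :
    HasDerivAt (fun w => -I * s (I * w)) ((c (I * z))⁻¹ * (1 + (-I * s (I * z)) ^ 2)) z := by
  have hS := (hs.comp z ((hasDerivAt_id z).const_mul I)).const_mul (-I)
  have h_one_add : 1 + (-I * s (I * z)) ^ 2 = c (I * z) ^ 2 * (1 + s (I * z) ^ 2) := by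
    linear_combination -hinv + s (I * z) ^ 2 * I_sq
  refine hS.congr_deriv ?_
  rw [h_one_add]
  field_simp
  linear_combination -(1 + s (I * z) ^ 2) * I_sq

theorem hasDerivAt_inv_comp_I_mul {s c : ℂ → ℂ} {z : ℂ}
    (hc : HasDerivAt c (-(s (I * z)) * (1 + c (I * z) ^ 2)) (I * z)) (hcz : c (I * z) ≠ 0) :
    HasDerivAt (fun w => (c (I * w))⁻¹) (-(-I * s (I * z)) * (1 + (c (I * z))⁻¹ ^ 2)) z := by
  refine ((hc.comp z ((hasDerivAt_id z).const_mul I)).inv hcz).congr_deriv ?_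
  simp only [Function.comp_apply]
  field_simp
  ring

theorem lemniscatic_imaginary_transformation_general
    (r : ℝ) (s c : ℂ → ℂ)
    (hs : ∀ z ∈ Metric.ball (0 : ℂ) r, HasDerivAt s (c z * (1 + s z ^ 2)) z)
    (hc : ∀ z ∈ Metric.ball (0 : ℂ) r, HasDerivAt c (-(s z) * (1 + c z ^ 2)) z)
    (hs0 : s 0 = 0) (hc0 : c 0 = 1)
    (hcnz : ∀ z ∈ Metric.ball (0 : ℂ) r, c z ≠ 0)
    (huniq : ∀ S C : ℂ → ℂ,
      AnalyticOnNhd ℂ S (Metric.ball (0 : ℂ) r) →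
      AnalyticOnNhd ℂ C (Metric.ball (0 : ℂ) r) →
      (∀ z ∈ Metric.ball (0 : ℂ) r, HasDerivAt S (C z * (1 + S z ^ 2)) z) →
      (∀ z ∈ Metric.ball (0 : ℂ) r, HasDerivAt C (-(S z) * (1 + C z ^ 2)) z) →
      S 0 = 0 → C 0 = 1 →
      Set.EqOn S s (Metric.ball (0 : ℂ) r) ∧ Set.EqOn C c (Metric.ball (0 : ℂ) r)) :
    ∀ z ∈ Metric.ball (0 : ℂ) r, s (Complex.I * z) = Complex.I * s z ∧ c (Complex.I * z) = (c z)⁻¹ := by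
  have hinv : ∀ z ∈ ball (0 : ℂ) r, s z ^ 2 + c z ^ 2 + s z ^ 2 * c z ^ 2 = 1 := fun z hz => by
    simpa [hs0, hc0] using lemniscate_invariant_eq isOpen_ball (convex_ball _ _).isPreconnected
      hs hc hz (mem_ball_self (pos_of_mem_ball hz))
  have hSd z (hz : z ∈ ball (0 : ℂ) r) := hasDerivAt_neg_I_mul_comp_I_mul
    (hs _ (I_mul_mem_ball_zero hz)) (hinv _ (I_mul_mem_ball_zero hz)) (hcnz _ (I_mul_mem_ball_zero hz))
  have hCd z (hz : z ∈ ball (0 : ℂ) r) :=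
    hasDerivAt_inv_comp_I_mul (hc _ (I_mul_mem_ball_zero hz)) (hcnz _ (I_mul_mem_ball_zero hz))
  obtain ⟨hSeq, hCeq⟩ := huniq _ _
    (DifferentiableOn.analyticOnNhd (fun z hz => (hSd z hz).differentiableAt.differentiableWithinAt)
      isOpen_ball)
    (DifferentiableOn.analyticOnNhd (fun z hz => (hCd z hz).differentiableAt.differentiableWithinAt)
      isOpen_ball)
    hSd hCd (by simp [hs0]) (by simp [hc0])
  intro z hz
  constructor
  · rw [← hSeq hz, ← mul_assoc, mul_neg, I_mul_I, neg_neg, one_mul]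
  · rw [← hCeq hz, inv_inv]

theorem lemniscatic_imaginary_transformation
    (r : ℝ) (hr : 0 < r) (s c : ℂ → ℂ)
    (hsA : AnalyticOnNhd ℂ s (Metric.ball (0 : ℂ) r))
    (hcA : AnalyticOnNhd ℂ c (Metric.ball (0 : ℂ) r))
    (hs : ∀ z ∈ Metric.ball (0 : ℂ) r, HasDerivAt s (c z * (1 + s z ^ 2)) z)
    (hc : ∀ z ∈ Metric.ball (0 : ℂ) r, HasDerivAt c (-(s z) * (1 + c z ^ 2)) z)
    (hs0 : s 0 = 0) (hc0 : c 0 = 1)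
    (hcnz : ∀ z ∈ Metric.ball (0 : ℂ) r, c z ≠ 0)
    (huniq : ∀ S C : ℂ → ℂ,
      AnalyticOnNhd ℂ S (Metric.ball (0 : ℂ) r) →
      AnalyticOnNhd ℂ C (Metric.ball (0 : ℂ) r) →
      (∀ z ∈ Metric.ball (0 : ℂ) r, HasDerivAt S (C z * (1 + S z ^ 2)) z) →
      (∀ z ∈ Metric.ball (0 : ℂ) r, HasDerivAt C (-(S z) * (1 + C z ^ 2)) z) →
      S 0 = 0 → C 0 = 1 →
      Set.EqOn S s (Metric.ball (0 : ℂ) r) ∧ Set.EqOn C c (Metric.ball (0 : ℂ) r)) :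
    ∀ z ∈ Metric.ball (0 : ℂ) r, s (Complex.I * z) = Complex.I * s z ∧ c (Complex.I * z) = (c z)⁻¹ :=
  lemniscatic_imaginary_transformation_general r s c hs hc hs0 hc0 hcnz huniq
end

section
/- Let s be analytic on B_r(0) with s(0)=0, |s| < 1 on B_r(0), and s'(z) = (1-s(z)⁴)^(1/2). If z ∈ B_r(0) and s(z)⁴ is real, then z is a nonnegative real multiple of s(z); in particular z⁴ is real. -/
/-!
The integrand `(1 - u⁴)^(-1/2)` is holomorphic on the unit disc, so it has a primitive `g` there
with `g 0 = 0`. By the differential equation, `g ∘ s` has derivative `1`, hence `g (s z) = z`.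
Integrating along the ray from `0` to `w = s z` gives `g w = w ∫₀¹ (1 - t⁴ w⁴)^(-1/2) dt`, and when
`w⁴ = c` is real (with `|c| < 1`) the integrand is the positive real number `(1 - t⁴ c)^(-1/2)`.
-/

open Complex Metric Set

lemma one_sub_pow_four_mem_slitPlane {w : ℂ} (hw : ‖w‖ < 1) : 1 - w ^ 4 ∈ slitPlane := by
  rw [sub_eq_add_neg]
  refine mem_slitPlane_of_norm_lt_one ?_
  rw [norm_neg, norm_pow]
  exact pow_lt_one₀ (norm_nonneg w) hw (by norm_num)

lemma differentiableOn_one_sub_pow_four_cpow (e : ℂ) :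
    DifferentiableOn ℂ (fun u : ℂ => (1 - u ^ 4) ^ e) (ball 0 1) := fun u hu =>
  ((show DifferentiableAt ℂ (fun u : ℂ => 1 - u ^ 4) u by fun_prop).cpow
    (differentiableAt_const e)
    (one_sub_pow_four_mem_slitPlane (mem_ball_zero_iff.1 hu))).differentiableWithinAt

lemma primitive_comp_eq_self {R : ℝ} {g s : ℂ → ℂ}
    (hg : ∀ u ∈ ball (0 : ℂ) 1, HasDerivAt g ((1 - u ^ 4) ^ (-(1 : ℂ) / 2)) u) (hg0 : g 0 = 0)
    (hs0 : s 0 = 0) (hbd : ∀ z ∈ ball (0 : ℂ) R, ‖s z‖ < 1)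
    (hs : ∀ z ∈ ball (0 : ℂ) R, HasDerivAt s ((1 - s z ^ 4) ^ ((1 : ℂ) / 2)) z)
    {z : ℂ} (hz : z ∈ ball (0 : ℂ) R) : g (s z) = z := by
  have hderiv : ∀ x ∈ ball (0 : ℂ) R, HasDerivAt (g ∘ s) 1 x := by
    intro x hx
    have hsx : s x ∈ ball (0 : ℂ) 1 := mem_ball_zero_iff.2 (hbd x hx)
    have hne : 1 - s x ^ 4 ≠ 0 := slitPlane_ne_zero (one_sub_pow_four_mem_slitPlane (hbd x hx))
    have h := (hg (s x) hsx).comp x (hs x hx)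
    rwa [← cpow_add _ _ hne, show -(1 : ℂ) / 2 + 1 / 2 = 0 by ring, cpow_zero] at h
  have h0 : (0 : ℂ) ∈ ball (0 : ℂ) R := mem_ball_self (pos_of_mem_ball hz)
  refine isOpen_ball.eqOn_of_deriv_eq (convex_ball 0 R).isPreconnected
    (fun x hx => (hderiv x hx).differentiableAt.differentiableWithinAt) differentiableOn_id
    (fun x hx => ?_) h0 (by simp [hs0, hg0]) hz
  rw [(hderiv x hx).deriv, deriv_id]

lemma exists_nonneg_primitive_eq_mul_of_im_pow_four_eq_zero {g : ℂ → ℂ}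
    (hg : ∀ u ∈ ball (0 : ℂ) 1, HasDerivAt g ((1 - u ^ 4) ^ (-(1 : ℂ) / 2)) u) (hg0 : g 0 = 0)
    {w : ℂ} (hw : ‖w‖ < 1) (hw4 : (w ^ 4).im = 0) :
    ∃ a : ℝ, 0 ≤ a ∧ g w = a * w := by
  set c : ℝ := (w ^ 4).re
  have hc : w ^ 4 = c := ext rfl (by simp [hw4])
  have hc1 : |c| < 1 := by
    rw [← Real.norm_eq_abs, ← norm_real, ← hc, norm_pow]
    exact pow_lt_one₀ (norm_nonneg w) hw (by norm_num)
  have hbase : ∀ t ∈ Icc (0 : ℝ) 1, 0 ≤ 1 - t ^ 4 * c := fun t ht => by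
    have ht4 : t ^ 4 ≤ 1 := pow_le_one₀ ht.1 ht.2
    nlinarith [abs_le.1 hc1.le, pow_nonneg ht.1 4]
  have hray : ∀ t ∈ Icc (0 : ℝ) 1, 0 + t • w ∈ ball (0 : ℂ) 1 := fun t ht => by
    rw [zero_add, mem_ball_zero_iff, norm_smul, Real.norm_of_nonneg ht.1]
    nlinarith [norm_nonneg w, ht.2]
  have hreal : ∀ t ∈ Icc (0 : ℝ) 1,
      (1 - (0 + t • w) ^ 4) ^ (-(1 : ℂ) / 2) = ((1 - t ^ 4 * c) ^ (-(1 / 2) : ℝ) : ℝ) := by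
    intro t ht
    rw [ofReal_cpow (hbase t ht), zero_add, real_smul, mul_pow, hc]
    push_cast
    ring_nf
  have hcont : ContinuousOn (fun t : ℝ => (1 - (0 + t • w) ^ 4) ^ (-(1 : ℂ) / 2)) (Icc 0 1) :=
    (differentiableOn_one_sub_pow_four_cpow _).continuousOn.comp
      (Continuous.continuousOn (by fun_prop)) hray
  have hftc := intervalIntegral.integral_unitInterval_deriv_eq_sub (f := g)
    (f' := fun u => (1 - u ^ 4) ^ (-(1 : ℂ) / 2)) hcont fun t ht => hg _ (hray t ht)
  rw [intervalIntegral.integral_congr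
      (fun t ht => hreal t (by rwa [uIcc_of_le zero_le_one] at ht)),
    intervalIntegral.integral_ofReal, zero_add, hg0, sub_zero, smul_eq_mul] at hftc
  exact ⟨_, intervalIntegral.integral_nonneg zero_le_one
    fun t ht => Real.rpow_nonneg (hbase t ht) _, by rw [← hftc, mul_comm]⟩

theorem lemniscatic_real_multiple_general
    (s : ℂ → ℂ)
    (hs0 : s 0 = 0)
    (hbd : ∀ z ∈ Metric.ball (0 : ℂ) ((2 : ℝ) ^ (-(1 : ℝ) / 2)), ‖s z‖ < 1)
    (hs : ∀ z ∈ Metric.ball (0 : ℂ) ((2 : ℝ) ^ (-(1 : ℝ) / 2)),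
      HasDerivAt s ((1 - s z ^ 4) ^ ((1 : ℂ) / 2)) z) :
    ∀ z ∈ Metric.ball (0 : ℂ) ((2 : ℝ) ^ (-(1 : ℝ) / 2)),
      (s z ^ 4).im = 0 →
      (∃ a : ℝ, 0 ≤ a ∧ z = (a : ℂ) * s z) ∧ (z ^ 4).im = 0 := by
  intro z hz hz4
  obtain ⟨g, hg0, hg⟩ :=
    (differentiableOn_one_sub_pow_four_cpow _).isExactOn_ball.with_val_at 0 0
  have hgs : g (s z) = z := primitive_comp_eq_self hg hg0 hs0 hbd hs hz
  obtain ⟨a, ha, hga⟩ :=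
    exists_nonneg_primitive_eq_mul_of_im_pow_four_eq_zero hg hg0 (hbd z hz) hz4
  have hz_eq : z = a * s z := hgs.symm.trans hga
  refine ⟨⟨a, ha, hz_eq⟩, ?_⟩
  rw [hz_eq, mul_pow, ← ofReal_pow, mul_im, ofReal_im, hz4]
  simp

theorem lemniscatic_real_multiple
    (s : ℂ → ℂ)
    (hsA : AnalyticOnNhd ℂ s (Metric.ball (0 : ℂ) ((2 : ℝ) ^ (-(1 : ℝ) / 2))))
    (hs0 : s 0 = 0)
    (hbd : ∀ z ∈ Metric.ball (0 : ℂ) ((2 : ℝ) ^ (-(1 : ℝ) / 2)), ‖s z‖ < 1)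
    (hs : ∀ z ∈ Metric.ball (0 : ℂ) ((2 : ℝ) ^ (-(1 : ℝ) / 2)),
      HasDerivAt s ((1 - s z ^ 4) ^ ((1 : ℂ) / 2)) z) :
    ∀ z ∈ Metric.ball (0 : ℂ) ((2 : ℝ) ^ (-(1 : ℝ) / 2)),
      (s z ^ 4).im = 0 →
      (∃ a : ℝ, 0 ≤ a ∧ z = (a : ℂ) * s z) ∧ (z ^ 4).im = 0 :=
  lemniscatic_real_multiple_general s hs0 hbd hs
end

section
/- The quartic q(σ) = (σ+1)⁴ + 16σ(σ-1)² has exactly one root in the open unit disc of ℂ, namely the real number 2√(14 + 10√2) - 5 - 4√2. -/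
/-!
Over `ℝ(√2)` the quartic factors as `(σ² + (10 - 8√2)σ + 1)(σ² + (10 + 8√2)σ + 1)`. The roots of a
real quadratic `σ² + cσ + 1` multiply to `1`, so a root inside the unit disc must be real (a non-real
root and its conjugate would both have norm `1`). For `c = 10 - 8√2` we have `c² < 4`, so there is
no real root; for `c = 10 + 8√2 > 2` the two real roots are `(-c ± √(c² - 4)) / 2`, and only the
one with `+` lies in `(-1, 1)`.
-/

theorem Complex.norm_eq_one_of_quadratic_root_of_ne_ofReal_re {c : ℝ} {σ : ℂ}
    (h : σ ^ 2 + c * σ + 1 = 0) (hσ : σ ≠ (σ.re : ℂ)) : ‖σ‖ = 1 := by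
  have hconj : (starRingEnd ℂ) σ ≠ σ := fun h' => hσ (Complex.conj_eq_iff_re.mp h').symm
  have hconj_root : (starRingEnd ℂ) σ ^ 2 + c * (starRingEnd ℂ) σ + 1 = 0 := by
    simpa using congrArg (starRingEnd ℂ) h
  have hsum : σ + (starRingEnd ℂ) σ + c = 0 := by
    have hfac : (σ - (starRingEnd ℂ) σ) * (σ + (starRingEnd ℂ) σ + c) = 0 := by
      linear_combination h - hconj_root
    exact (mul_eq_zero.mp hfac).resolve_left (sub_ne_zero.mpr hconj.symm)
  have hnormSq : (Complex.normSq σ : ℂ) = 1 := by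
    rw [← Complex.mul_conj]
    linear_combination σ * hsum - h
  have : ‖σ‖ ^ 2 = 1 := by rw [Complex.sq_norm]; exact_mod_cast hnormSq
  nlinarith [norm_nonneg σ]

theorem quadratic_ne_zero_of_sq_lt_four {c : ℝ} (hc : c ^ 2 < 4) (x : ℝ) :
    x ^ 2 + c * x + 1 ≠ 0 := by
  intro h
  nlinarith [sq_nonneg (2 * x + c)]

theorem abs_lt_one_and_quadratic_root_iff {c : ℝ} (hc : 2 < c) (x : ℝ) :
    (|x| < 1 ∧ x ^ 2 + c * x + 1 = 0) ↔ x = (-c + Real.sqrt (c ^ 2 - 4)) / 2 := by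
  set d := Real.sqrt (c ^ 2 - 4)
  have hd0 : 0 ≤ d := Real.sqrt_nonneg _
  have hd2 : d ^ 2 = c ^ 2 - 4 := Real.sq_sqrt (by nlinarith)
  constructor
  · rintro ⟨hx, hroot⟩
    have hfac : (x - (-c + d) / 2) * (x - (-c - d) / 2) = 0 := by
      linear_combination hroot - hd2 / 4
    refine sub_eq_zero.mp ((mul_eq_zero.mp hfac).resolve_right fun h => ?_)
    -- the other root lies below `-c / 2 < -1`
    linarith [(abs_lt.mp hx).1]
  · rintro rfl
    refine ⟨abs_lt.mpr ⟨?_, ?_⟩, by linear_combination hd2 / 4⟩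
    · nlinarith
    · nlinarith

theorem Complex.norm_lt_one_and_quadratic_root_iff {c : ℝ} {σ : ℂ} :
    (‖σ‖ < 1 ∧ σ ^ 2 + c * σ + 1 = 0) ↔
      ∃ x : ℝ, σ = x ∧ |x| < 1 ∧ x ^ 2 + c * x + 1 = 0 := by
  constructor
  · rintro ⟨hσ, hroot⟩
    have hreal : σ = (σ.re : ℂ) := by
      by_contra hne
      exact hσ.ne (Complex.norm_eq_one_of_quadratic_root_of_ne_ofReal_re hroot hne)
    rw [hreal, Complex.norm_real, Real.norm_eq_abs] at hσ
    rw [hreal] at hroot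
    exact ⟨σ.re, hreal, hσ, by exact_mod_cast hroot⟩
  · rintro ⟨x, rfl, hx, hroot⟩
    exact ⟨by rwa [Complex.norm_real, Real.norm_eq_abs], by exact_mod_cast hroot⟩

theorem Complex.not_norm_lt_one_and_quadratic_root_of_sq_lt_four {c : ℝ} (hc : c ^ 2 < 4)
    (σ : ℂ) : ¬(‖σ‖ < 1 ∧ σ ^ 2 + c * σ + 1 = 0) := by
  rw [Complex.norm_lt_one_and_quadratic_root_iff]
  rintro ⟨x, -, -, hroot⟩
  exact quadratic_ne_zero_of_sq_lt_four hc x hroot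

theorem Complex.norm_lt_one_and_quadratic_root_iff_of_two_lt {c : ℝ} (hc : 2 < c) (σ : ℂ) :
    (‖σ‖ < 1 ∧ σ ^ 2 + c * σ + 1 = 0) ↔
      σ = (((-c + Real.sqrt (c ^ 2 - 4)) / 2 : ℝ) : ℂ) := by
  simp only [Complex.norm_lt_one_and_quadratic_root_iff, abs_lt_one_and_quadratic_root_iff hc,
    exists_eq_right]

theorem quartic_eq_mul_quadratic (σ : ℂ) :
    (σ + 1) ^ 4 + 16 * σ * (σ - 1) ^ 2 =
      (σ ^ 2 + ((10 - 8 * Real.sqrt 2 : ℝ) : ℂ) * σ + 1) *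
        (σ ^ 2 + ((10 + 8 * Real.sqrt 2 : ℝ) : ℂ) * σ + 1) := by
  have h : ((Real.sqrt 2 : ℝ) : ℂ) ^ 2 = 2 := by
    exact_mod_cast Real.sq_sqrt zero_le_two
  push_cast
  linear_combination 64 * σ ^ 2 * h

theorem neg_add_sqrt_discrim_div_two_eq :
    (-(10 + 8 * Real.sqrt 2) + Real.sqrt ((10 + 8 * Real.sqrt 2) ^ 2 - 4)) / 2 =
      2 * Real.sqrt (14 + 10 * Real.sqrt 2) - 5 - 4 * Real.sqrt 2 := by
  have h2 : Real.sqrt 2 ^ 2 = 2 := Real.sq_sqrt zero_le_two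
  have hdisc : (10 + 8 * Real.sqrt 2) ^ 2 - 4 = 4 ^ 2 * (14 + 10 * Real.sqrt 2) := by
    linear_combination 64 * h2
  rw [hdisc, Real.sqrt_mul (by norm_num), Real.sqrt_sq (by norm_num)]
  ring

theorem quartic_unique_root_in_disc (σ : ℂ) :
    (‖σ‖ < 1 ∧ (σ + 1) ^ 4 + 16 * σ * (σ - 1) ^ 2 = 0) ↔
      σ = ((2 * Real.sqrt (14 + 10 * Real.sqrt 2) - 5 - 4 * Real.sqrt 2 : ℝ) : ℂ) := by
  have h2 : Real.sqrt 2 ^ 2 = 2 := Real.sq_sqrt zero_le_two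
  have hsqrt2 : 1.4 < Real.sqrt 2 := by nlinarith [Real.sqrt_nonneg 2]
  have hsmall : (10 - 8 * Real.sqrt 2) ^ 2 < 4 := by nlinarith
  have hlarge : 2 < 10 + 8 * Real.sqrt 2 := by linarith
  rw [quartic_eq_mul_quadratic, mul_eq_zero, and_or_left,
    or_iff_right (Complex.not_norm_lt_one_and_quadratic_root_of_sq_lt_four hsmall σ),
    Complex.norm_lt_one_and_quadratic_root_iff_of_two_lt hlarge, neg_add_sqrt_discrim_div_two_eq]
end

section
/- Let f be a real function on an interval containing [0, √2) with f(0) = 0 and f'(t) = (1+f(t)⁴)^(1/2) for all t. Then there exists a unique K ∈ (0,1) with f(K) = 1. -/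
/-!
Since `f' = √(1 + f⁴) ≥ 1 > 0`, `f` is strictly increasing on `[0, 1]`, hence positive on
`(0, 1]`. There `f' > 1`, so `t ↦ f t - t` is strictly increasing too and `f 1 > 1`.
The intermediate value theorem gives `K`, strict monotonicity its uniqueness.
-/

open Set

lemma strictMonoOn_Icc_of_hasDerivAt_pos {f f' : ℝ → ℝ} {a b : ℝ}
    (hf : ∀ t ∈ Icc a b, HasDerivAt f (f' t) t) (hf' : ∀ t ∈ Ioo a b, 0 < f' t) :
    StrictMonoOn f (Icc a b) :=
  strictMonoOn_of_hasDerivWithinAt_pos (convex_Icc a b)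
    (fun t ht ↦ (hf t ht).continuousAt.continuousWithinAt)
    (fun t ht ↦ (hf t (interior_subset ht)).hasDerivWithinAt)
    (fun t ht ↦ hf' t (by rwa [interior_Icc] at ht))

lemma existsUnique_mem_Ioo_eq_of_strictMonoOn {α δ : Type*} [ConditionallyCompleteLinearOrder α]
    [TopologicalSpace α] [OrderTopology α] [DenselyOrdered α]
    [LinearOrder δ] [TopologicalSpace δ] [OrderClosedTopology δ] {f : α → δ} {a b : α} {y : δ}
    (hab : a ≤ b) (hcont : ContinuousOn f (Icc a b)) (hmono : StrictMonoOn f (Icc a b))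
    (hy : y ∈ Ioo (f a) (f b)) : ∃! x, x ∈ Ioo a b ∧ f x = y := by
  obtain ⟨x, hx, rfl⟩ := intermediate_value_Ioo hab hcont hy
  exact ⟨x, ⟨hx, rfl⟩, fun x' hx' ↦
    hmono.injOn (Ioo_subset_Icc_self hx'.1) (Ioo_subset_Icc_self hx) hx'.2⟩

lemma one_le_sqrt_one_add_pow_four (x : ℝ) : 1 ≤ √(1 + x ^ 4) :=
  Real.one_le_sqrt.2 (by simp only [le_add_iff_nonneg_right]; positivity)

lemma one_lt_sqrt_one_add_pow_four {x : ℝ} (hx : x ≠ 0) : 1 < √(1 + x ^ 4) :=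
  Real.lt_sqrt_of_sq_lt (by simp only [one_pow, lt_add_iff_pos_right]; positivity)

theorem exists_unique_K_general
    (I : Set ℝ) (hIsub : Set.Ico (0 : ℝ) (Real.sqrt 2) ⊆ I)
    (f : ℝ → ℝ) (hf0 : f 0 = 0)
    (hf : ∀ t ∈ I, HasDerivAt f (Real.sqrt (1 + f t ^ 4)) t) :
    ∃! K : ℝ, K ∈ Set.Ioo (0 : ℝ) 1 ∧ f K = 1 := by
  have hderiv : ∀ t ∈ Icc (0 : ℝ) 1, HasDerivAt f (√(1 + f t ^ 4)) t := fun t ht ↦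
    hf t (hIsub ⟨ht.1, ht.2.trans_lt Real.one_lt_sqrt_two⟩)
  have hmono : StrictMonoOn f (Icc 0 1) := strictMonoOn_Icc_of_hasDerivAt_pos hderiv
    fun t _ ↦ zero_lt_one.trans_le (one_le_sqrt_one_add_pow_four _)
  have hmono_sub : StrictMonoOn (fun t ↦ f t - t) (Icc 0 1) :=
    strictMonoOn_Icc_of_hasDerivAt_pos (fun t ht ↦ (hderiv t ht).sub (hasDerivAt_id t))
      fun t ht ↦ by
        have hft : 0 < f t :=
          hf0 ▸ hmono (left_mem_Icc.2 zero_le_one) (Ioo_subset_Icc_self ht) ht.1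
        exact sub_pos.2 (one_lt_sqrt_one_add_pow_four hft.ne')
  have hf1 : 1 < f 1 := by
    simpa [hf0] using hmono_sub (left_mem_Icc.2 zero_le_one) (right_mem_Icc.2 zero_le_one) one_pos
  exact existsUnique_mem_Ioo_eq_of_strictMonoOn zero_le_one
    (fun t ht ↦ (hderiv t ht).continuousAt.continuousWithinAt) hmono
    ⟨by rw [hf0]; exact one_pos, hf1⟩

theorem exists_unique_K
    (I : Set ℝ) (hI : IsOpen I) (hIconn : IsConnected I)
    (hIsub : Set.Ico (0 : ℝ) (Real.sqrt 2) ⊆ I)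
    (f : ℝ → ℝ) (hf0 : f 0 = 0)
    (hf : ∀ t ∈ I, HasDerivAt f (Real.sqrt (1 + f t ^ 4)) t) :
    ∃! K : ℝ, K ∈ Set.Ioo (0 : ℝ) 1 ∧ f K = 1 :=
  exists_unique_K_general I hIsub f hf0 hf
end

section
/- ∫₀¹ dσ/(1-σ⁴)^(1/2) = √2 · ∫₀¹ dτ/(1+τ⁴)^(1/2); that is, L = √2·K where K = ∫₀¹ (1+τ⁴)^(-1/2) dτ and L = ∫₀¹ (1-σ⁴)^(-1/2) dσ. -/
/-!
The substitution `σ = √2 τ / √(1 + τ⁴)` maps `(0, 1)` increasingly onto itself, and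
`1 - σ⁴ = ((1 - τ⁴) / (1 + τ⁴))²` while `dσ/dτ = √2 (1 - τ⁴) / (1 + τ⁴)^(3/2)`, so
`dσ / √(1 - σ⁴) = √2 dτ / √(1 + τ⁴)`. The change of variables formula for injective maps
needs no integrability, so the singularity of the left integrand at `σ = 1` costs nothing.
-/

open Set MeasureTheory

noncomputable def lemniscateSubst (τ : ℝ) : ℝ := √2 * τ / √(1 + τ ^ 4)

lemma continuous_lemniscateSubst : Continuous lemniscateSubst :=
  Continuous.div (by fun_prop) (by fun_prop) fun τ => (Real.sqrt_pos.mpr (by positivity)).ne'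

lemma hasDerivAt_lemniscateSubst (τ : ℝ) :
    HasDerivAt lemniscateSubst (√2 * (1 - τ ^ 4) / ((1 + τ ^ 4) * √(1 + τ ^ 4))) τ := by
  have hpos : 0 < 1 + τ ^ 4 := by positivity
  have hsqrt : HasDerivAt (fun τ : ℝ => √(1 + τ ^ 4)) (4 * τ ^ 3 / (2 * √(1 + τ ^ 4))) τ := by
    simpa using ((hasDerivAt_pow 4 τ).const_add 1).sqrt hpos.ne'
  have hquot := ((hasDerivAt_id' τ).const_mul √2).div hsqrt (Real.sqrt_pos.mpr hpos).ne'
  refine hquot.congr_deriv ?_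
  have hsq : √(1 + τ ^ 4) ^ 2 = 1 + τ ^ 4 := Real.sq_sqrt hpos.le
  field_simp
  linear_combination 4 * τ ^ 4 * hsq

lemma one_sub_lemniscateSubst_pow_four (τ : ℝ) :
    1 - lemniscateSubst τ ^ 4 = ((1 - τ ^ 4) / (1 + τ ^ 4)) ^ 2 := by
  have hpos : 0 < 1 + τ ^ 4 := by positivity
  have h2 : √2 ^ 4 = 4 := by
    rw [show 4 = 2 * 2 from rfl, pow_mul, Real.sq_sqrt zero_le_two]; norm_num
  have hτ : √(1 + τ ^ 4) ^ 4 = (1 + τ ^ 4) ^ 2 := by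
    rw [show 4 = 2 * 2 from rfl, pow_mul, Real.sq_sqrt hpos.le]
  rw [lemniscateSubst, div_pow, mul_pow, h2, hτ]
  field_simp
  ring

lemma lemniscateSubst_zero : lemniscateSubst 0 = 0 := by simp [lemniscateSubst]

lemma lemniscateSubst_one : lemniscateSubst 1 = 1 := by norm_num [lemniscateSubst]

lemma strictMonoOn_lemniscateSubst : StrictMonoOn lemniscateSubst (Icc (-1) 1) := by
  refine strictMonoOn_of_deriv_pos (convex_Icc _ _) continuous_lemniscateSubst.continuousOn
    fun τ hτ => ?_
  rw [interior_Icc] at hτ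
  have hτ4 : τ ^ 4 < 1 := by
    rw [← (show Even 4 by decide).pow_abs]
    exact pow_lt_one₀ (abs_nonneg τ) (abs_lt.mpr hτ) four_ne_zero
  rw [(hasDerivAt_lemniscateSubst τ).deriv]
  have : 0 < 1 - τ ^ 4 := by linarith
  positivity

lemma deriv_mul_inv_sqrt_one_sub_lemniscateSubst {τ : ℝ} (hτ : τ ^ 4 < 1) :
    √2 * (1 - τ ^ 4) / ((1 + τ ^ 4) * √(1 + τ ^ 4)) * (1 / √(1 - lemniscateSubst τ ^ 4)) =
      √2 * (1 / √(1 + τ ^ 4)) := by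
  have hpos : 0 < 1 + τ ^ 4 := by positivity
  have hsub : 0 < 1 - τ ^ 4 := by linarith
  rw [one_sub_lemniscateSubst_pow_four, Real.sqrt_sq (by positivity)]
  field_simp

lemma image_lemniscateSubst_Ioo : lemniscateSubst '' Ioo 0 1 = Ioo 0 1 := by
  have hmono : StrictMonoOn lemniscateSubst (Icc 0 1) :=
    strictMonoOn_lemniscateSubst.mono (Icc_subset_Icc (by norm_num) le_rfl)
  rw [continuous_lemniscateSubst.continuousOn.image_Ioo_of_strictMonoOn zero_le_one hmono,
    lemniscateSubst_zero, lemniscateSubst_one]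

theorem L_eq_sqrt_two_mul_K :
    (∫ σ in (0 : ℝ)..1, 1 / Real.sqrt (1 - σ ^ 4)) =
      Real.sqrt 2 * ∫ τ in (0 : ℝ)..1, 1 / Real.sqrt (1 + τ ^ 4) := by
  rw [intervalIntegral.integral_of_le zero_le_one, intervalIntegral.integral_of_le zero_le_one,
    integral_Ioc_eq_integral_Ioo, integral_Ioc_eq_integral_Ioo, ← integral_const_mul]
  calc ∫ σ in Ioo 0 1, 1 / √(1 - σ ^ 4)
      = ∫ σ in lemniscateSubst '' Ioo 0 1, 1 / √(1 - σ ^ 4) := by rw [image_lemniscateSubst_Ioo]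
    _ = ∫ τ in Ioo 0 1, |√2 * (1 - τ ^ 4) / ((1 + τ ^ 4) * √(1 + τ ^ 4))| •
          (1 / √(1 - lemniscateSubst τ ^ 4)) :=
      integral_image_eq_integral_abs_deriv_smul measurableSet_Ioo
        (fun τ _ => (hasDerivAt_lemniscateSubst τ).hasDerivWithinAt)
        (strictMonoOn_lemniscateSubst.injOn.mono (Ioo_subset_Icc_self.trans
          (Icc_subset_Icc (by norm_num) le_rfl))) _
    _ = ∫ τ in Ioo 0 1, √2 * (1 / √(1 + τ ^ 4)) := by
      refine setIntegral_congr_fun measurableSet_Ioo fun τ ⟨h0, h1⟩ => ?_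
      have hτ4 : τ ^ 4 < 1 := pow_lt_one₀ h0.le h1 (by norm_num)
      have hsub : 0 < 1 - τ ^ 4 := by linarith
      rw [abs_of_pos (by positivity), smul_eq_mul,
        deriv_mul_inv_sqrt_one_sub_lemniscateSubst hτ4]
end

section
/- Let s be a meromorphic function with (s')² = 1 - s⁴, and define ℘(z) = λ²/s(λz)² where λ = (1+i)/2. Then wherever defined, (℘')² = 4℘³ + ℘; i.e., ℘ satisfies the Weierstrass differential equation with invariants g₂ = -1, g₃ = 0. -/
/-! By the chain rule `℘' z = -2 λ³ s'(λz) / s(λz)³`, so the equation `s'² = 1 - s⁴` gives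
`℘'² = 4 λ⁶ (1 - s⁴) / s⁶ = 4 ℘³ - 4 λ⁴ ℘`, and `4 λ⁴ = -1` for `λ = (1 + i) / 2`. -/

open Complex

lemma HasDerivAt.const_div_sq_comp_const_mul {𝕜 : Type*} [NontriviallyNormedField 𝕜]
    {s : 𝕜 → 𝕜} {d a c z : 𝕜}
    (hs : HasDerivAt s d (c * z)) (hz : s (c * z) ≠ 0) :
    HasDerivAt (fun w => a / s (c * w) ^ 2) (-2 * a * c * d / s (c * z) ^ 3) z := by
  have hcomp : HasDerivAt (fun w => s (c * w)) (d * c) z :=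
    hs.comp z (by simpa using (hasDerivAt_id z).const_mul c)
  refine ((hasDerivAt_const z a).fun_div (hcomp.fun_pow 2) (pow_ne_zero 2 hz)).congr_deriv ?_
  field_simp
  ring

lemma sq_deriv_eq_of_lemniscatic {K : Type*} [Field K] {l t d : K} (hl : 4 * l ^ 4 = -1) (ht : t ≠ 0)
    (hd : d ^ 2 = 1 - t ^ 4) :
    (-2 * l ^ 2 * l * d / t ^ 3) ^ 2 = 4 * (l ^ 2 / t ^ 2) ^ 3 + l ^ 2 / t ^ 2 := by
  field_simp
  linear_combination 4 * l ^ 6 * hd - l ^ 2 * t ^ 4 * hl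

lemma four_mul_one_add_I_div_two_pow_four : 4 * ((1 + I) / 2) ^ 4 = -1 := by
  linear_combination ((I ^ 2 + 4 * I + 5) / 4) * I_sq

theorem weierstrass_pseudolemniscatic_general
    (U : Set ℂ)
    (s s' : ℂ → ℂ)
    (hs : ∀ z ∈ U, HasDerivAt s (s' z) z)
    (hsq : ∀ z ∈ U, s' z ^ 2 = 1 - s z ^ 4) :
    ∀ z : ℂ, ((1 + Complex.I) / 2) * z ∈ U → s (((1 + Complex.I) / 2) * z) ≠ 0 →
      (deriv (fun w => ((1 + Complex.I) / 2) ^ 2 / s (((1 + Complex.I) / 2) * w) ^ 2) z) ^ 2 =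
        4 * (((1 + Complex.I) / 2) ^ 2 / s (((1 + Complex.I) / 2) * z) ^ 2) ^ 3 +
          ((1 + Complex.I) / 2) ^ 2 / s (((1 + Complex.I) / 2) * z) ^ 2 := by
  intro z hz hne
  rw [((hs _ hz).const_div_sq_comp_const_mul hne).deriv]
  exact sq_deriv_eq_of_lemniscatic four_mul_one_add_I_div_two_pow_four hne (hsq _ hz)

theorem weierstrass_pseudolemniscatic
    (U : Set ℂ) (hU : IsOpen U)
    (s s' s'' : ℂ → ℂ)
    (hs : ∀ z ∈ U, HasDerivAt s (s' z) z)
    (hs' : ∀ z ∈ U, HasDerivAt s' (s'' z) z)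
    (hsq : ∀ z ∈ U, s' z ^ 2 = 1 - s z ^ 4)
    (hsecond : ∀ z ∈ U, s'' z = -2 * s z ^ 3) :
    ∀ z : ℂ, ((1 + Complex.I) / 2) * z ∈ U → s (((1 + Complex.I) / 2) * z) ≠ 0 →
      (deriv (fun w => ((1 + Complex.I) / 2) ^ 2 / s (((1 + Complex.I) / 2) * w) ^ 2) z) ^ 2 =
        4 * (((1 + Complex.I) / 2) ^ 2 / s (((1 + Complex.I) / 2) * z) ^ 2) ^ 3 +
          ((1 + Complex.I) / 2) ^ 2 / s (((1 + Complex.I) / 2) * z) ^ 2 :=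
  weierstrass_pseudolemniscatic_general U s s' hs hsq
end
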